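/- Let D be a triangulated category with an admissible G-action, |G| invertible in D, such that D^G carries the canonical triangulated structure. If (D^{≤0}, D^{≥0}) is a t-structure on D with D^{≤0} invariant under all F_g, then ((D^{≤0})^G, (D^{≥0})^G) is a t-structure on D^G. Moreover it is nondegenerate (resp. bounded, resp. stable) whenever the original t-structure is. -/

import Mathlib

open CategoryTheory Limits
universe v u
variable {G : Type*} [Group G] {A : Type u} [Category.{v} A]

structure GAction (G : Type*) [Group G] (A : Type u) [Category.{v} A] where
  F : G → A ⥤ A
  equiv : ∀ g, (F g).IsEquivalence
  δ : ∀ g h : G, F h ⋙ F g ≅ F (h * g)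
  cocycle : ∀ (g h l : G) (X : A),
    (F g).map ((δ h l).hom.app X) ≫ (δ g (l * h)).hom.app X ≫
      eqToHom (congrArg (fun m => (F m).obj X) (mul_assoc l h g)) =
    (δ g h).hom.app ((F l).obj X) ≫ (δ (h * g) l).hom.app X

structure EqObj (act : GAction G A) where
  obj : A
  lam : ∀ g : G, (act.F g).obj obj ≅ obj
  compat : ∀ g h : G,
    (act.F g).map (lam h).hom ≫ (lam g).hom =
      (act.δ g h).hom.app obj ≫ (lam (h * g)).hom

namespace EqObj

variable {act : GAction G A}

@[ext]
structure EqHom (X Y : EqObj act) where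
  f : X.obj ⟶ Y.obj
  comm : ∀ g : G, (act.F g).map f ≫ (Y.lam g).hom = (X.lam g).hom ≫ f

instance : Category (EqObj act) where
  Hom := EqHom
  id X := ⟨𝟙 X.obj, by intro g; simp⟩
  comp {X Y Z} u v := ⟨u.f ≫ v.f, by
    intro g
    rw [Functor.map_comp, Category.assoc, v.comm, ← Category.assoc, u.comm, Category.assoc]⟩

@[ext]
lemma hom_ext {X Y : EqObj act} {u v : X ⟶ Y} (h : u.f = v.f) : u = v := EqHom.ext h

@[simp] lemma id_f (X : EqObj act) : (𝟙 X : X ⟶ X).f = 𝟙 X.obj := rfl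
@[simp] lemma comp_f {X Y Z : EqObj act} (u : X ⟶ Y) (v : Y ⟶ Z) :
    (u ≫ v).f = u.f ≫ v.f := rfl

@[simps]
def forget (act : GAction G A) : EqObj act ⥤ A where
  obj X := X.obj
  map u := u.f

section Preadditive

variable [Preadditive A] [∀ g : G, (act.F g).Additive]

instance instAddHom (X Y : EqObj act) : Add (X ⟶ Y) :=
  ⟨fun u v => ⟨u.f + v.f, fun g => by
    simp [Preadditive.add_comp, Preadditive.comp_add, u.comm g, v.comm g]⟩⟩

instance instZeroHom (X Y : EqObj act) : Zero (X ⟶ Y) :=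
  ⟨⟨0, fun g => by simp⟩⟩

instance instNegHom (X Y : EqObj act) : Neg (X ⟶ Y) :=
  ⟨fun u => ⟨-u.f, fun g => by
    simp [Preadditive.neg_comp, Preadditive.comp_neg, u.comm g]⟩⟩

instance homAddCommGroup (X Y : EqObj act) : AddCommGroup (X ⟶ Y) where
  add := (· + ·)
  zero := 0
  neg := Neg.neg
  add_assoc := fun a b c => hom_ext (add_assoc a.f b.f c.f)
  zero_add := fun a => hom_ext (zero_add a.f)
  add_zero := fun a => hom_ext (add_zero a.f)
  nsmul := nsmulRec
  zsmul := zsmulRec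
  neg_add_cancel := fun a => hom_ext (neg_add_cancel a.f)
  add_comm := fun a b => hom_ext (add_comm a.f b.f)

instance : Preadditive (EqObj act) where
  homGroup := homAddCommGroup
  add_comp _ _ _ f f' g := hom_ext (Preadditive.add_comp _ _ _ f.f f'.f g.f)
  comp_add _ _ _ f g g' := hom_ext (Preadditive.comp_add _ _ _ f.f g.f g'.f)

@[simp] lemma add_f {X Y : EqObj act} (u v : X ⟶ Y) : (u + v).f = u.f + v.f := rfl
@[simp] lemma zero_f (X Y : EqObj act) : (0 : X ⟶ Y).f = 0 := rfl

instance : (forget act).Additive where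
  map_add := rfl

end Preadditive

end EqObj

/-- A functor is *separable* if the induced transformation on hom-sets admits a natural
retraction. -/
def CategoryTheory.Functor.Separable {C : Type*} [Category C] {B : Type*} [Category B]
    (F : C ⥤ B) : Prop :=
  ∃ Φ : ∀ X Y : C, (F.obj X ⟶ F.obj Y) → (X ⟶ Y),
    (∀ (X Y : C) (f : X ⟶ Y), Φ X Y (F.map f) = f) ∧
    (∀ (X' X Y Y' : C) (u : X' ⟶ X) (v : Y ⟶ Y') (h : F.obj X ⟶ F.obj Y),
      Φ X' Y' (F.map u ≫ h ≫ F.map v) = u ≫ Φ X Y h ≫ v)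

/-- `n` is invertible in an additive category `A` if every morphism is uniquely divisible
by `n`. -/
def NatInvertibleIn (n : ℕ) (A : Type u) [Category.{v} A] [Preadditive A] : Prop :=
  ∀ ⦃X Y : A⦄ (f : X ⟶ Y), ∃! g : X ⟶ Y, n • g = f

/-- A functor `A ⥤ A^G` *is the induction functor* if its composite with the forgetful
functor is naturally isomorphic to `X ↦ ⊕_{g ∈ G} F_g(X)`. -/
def IsInduction [Preadditive A] [HasFiniteBiproducts A] [Fintype G] (act : GAction G A)
    (Ind : A ⥤ EqObj act) : Prop :=
  ∃ iso : ∀ X : A, (EqObj.forget act).obj (Ind.obj X) ≅ ⨁ (fun g : G => (act.F g).obj X),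
    ∀ (X Y : A) (f : X ⟶ Y),
      (EqObj.forget act).map (Ind.map f) ≫ (iso Y).hom =
        (iso X).hom ≫ biproduct.map (fun g => (act.F g).map f)

/-- `Ξ` is the unit of the action `act`. -/
def IsActionUnit (act : GAction G A) (Ξ : act.F (1 : G) ≅ 𝟭 A) : Prop :=
  (∀ X : A, (act.F (1 : G)).map (Ξ.hom.app X) =
      (act.δ (1 : G) (1 : G)).hom.app X ≫
        eqToHom (congrArg (fun m => (act.F m).obj X) (one_mul (1 : G)))) ∧
  (∀ X : A, Ξ.hom.app ((act.F (1 : G)).obj X) =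
      (act.δ (1 : G) (1 : G)).hom.app X ≫
        eqToHom (congrArg (fun m => (act.F m).obj X) (one_mul (1 : G))))

/-- A `G`-equivariant structure on a functor `F` between two categories with
`G`-actions. -/
structure EquivStructure {B : Type*} [Category B]
    (actA : GAction G A) (actB : GAction G B) (F : A ⥤ B) where
  φ : ∀ g : G, actA.F g ⋙ F ≅ F ⋙ actB.F g
  square : ∀ (g h : G) (X : A),
    (φ g).hom.app ((actA.F h).obj X) ≫ (actB.F g).map ((φ h).hom.app X) ≫
        (actB.δ g h).hom.app (F.obj X) =
      F.map ((actA.δ g h).hom.app X) ≫ (φ (h * g)).hom.app X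
  triangle : ∀ (Ξ : actA.F (1 : G) ≅ 𝟭 A) (Υ : actB.F (1 : G) ≅ 𝟭 B),
    IsActionUnit actA Ξ → IsActionUnit actB Υ →
    ∀ X : A, (φ (1 : G)).hom.app X ≫ Υ.hom.app (F.obj X) = F.map (Ξ.hom.app X)

section Triangulated

open ZeroObject

variable {D : Type u} [Category.{v} D] [Preadditive D] [HasZeroObject D]
  [HasShift D ℤ] [∀ n : ℤ, (shiftFunctor D n).Additive] [Pretriangulated D]
variable (act : GAction G D) [∀ g : G, (act.F g).Additive]

/-- The zero object of `A^G`. -/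
noncomputable def EqObj.zeroEq : EqObj act where
  obj := 0
  lam g := (act.F g).mapZeroObject
  compat g h := (isZero_zero D).eq_of_tgt _ _

lemma EqObj.isZero_zeroEq : IsZero (EqObj.zeroEq act) := by
  rw [IsZero.iff_id_eq_zero]
  apply EqObj.hom_ext
  exact (isZero_zero D).eq_of_tgt _ _

instance : HasZeroObject (EqObj act) := ⟨⟨EqObj.zeroEq act, EqObj.isZero_zeroEq act⟩⟩

open Pretriangulated

/-- The action `act` is admissible: each `F_g` is exact (commutes with the shift and
preserves distinguished triangles), and the commuting isomorphisms make the shift functor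
`[1]` a `G`-equivariant functor. -/
structure AdmissibleOn [∀ g : G, (act.F g).CommShift ℤ] : Prop where
  exact : ∀ (g : G), ∀ T ∈ distTriang D, (act.F g).mapTriangle.obj T ∈ distTriang D
  shift_equivariant : ∃ e : EquivStructure act act (shiftFunctor D (1 : ℤ)),
    ∀ g : G, e.φ g = ((act.F g).commShiftIso (1 : ℤ)).symm

end Triangulated

section TStr

open Pretriangulated Triangulated

variable {C : Type*} [Category C] [Preadditive C] [HasZeroObject C] [HasShift C ℤ]
  [∀ n : ℤ, (shiftFunctor C n).Additive] [Pretriangulated C]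

/-- A t-structure is nondegenerate if `⋂ₙ C^{≤n} = 0 = ⋂ₙ C^{≥n}`. -/
def CategoryTheory.Triangulated.TStructure.Nondegenerate (t : TStructure C) : Prop :=
  (∀ X : C, (∀ n : ℤ, t.le n X) → IsZero X) ∧
  (∀ X : C, (∀ n : ℤ, t.ge n X) → IsZero X)

/-- A t-structure is bounded if every object lies in some `C^{[m,n]}`. -/
def CategoryTheory.Triangulated.TStructure.Bounded (t : TStructure C) : Prop :=
  ∀ X : C, ∃ m n : ℤ, t.ge m X ∧ t.le n X

/-- A t-structure is stable if `C^{≤0}` is a triangulated subcategory, i.e. closed under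
the inverse shift. -/
def CategoryTheory.Triangulated.TStructure.Stable (t : TStructure C) : Prop :=
  ∀ X : C, t.le 0 X → t.le 0 (X⟦(-1 : ℤ)⟧)

end TStr

open Pretriangulated Triangulated

/-!
The t-structure on `D^G` is the preimage of `t` under the forgetful functor `ω`. Since `ω` is
faithful, commutes with the shift and preserves distinguished triangles, every axiom except the
existence of truncation triangles is inherited from `D`, and a truncation triangle of an
equivariant object `B` only needs a lift of the truncation `X ⟶ ω B` to `D^G`: completing it to a
distinguished triangle in `D^G`, the third vertex is isomorphic under `ω` to that of the
truncation triangle in `D`.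

To lift `X ⟶ ω B`, note that each `F_g` is exact and preserves `D^{≤0}`, hence also `D^{≥1}`
(test against `D^{≤0}` after applying `F_{g⁻¹}`). So `F_g X ⟶ F_g (ω B) ≅ ω B` is again a
truncation, and truncations are characterised by unique factorisation of maps from `D^{≤0}`.
This yields isomorphisms `F_g X ≅ X` over `ω B`, and the same uniqueness forces their cocycle
condition.
-/

namespace CategoryTheory.ObjectProperty

variable {C : Type*} [Category C] (P : ObjectProperty C)

def LiftsUniquely {X Y : C} (f : X ⟶ Y) : Prop :=
  ∀ ⦃W : C⦄, P W → ∀ w : W ⟶ Y, ∃! l : W ⟶ X, l ≫ f = w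

namespace LiftsUniquely

variable {P} {X X' Y : C} {f : X ⟶ Y} {f' : X' ⟶ Y}

noncomputable def lift (hf : P.LiftsUniquely f) {W : C} (hW : P W) (w : W ⟶ Y) : W ⟶ X :=
  (hf hW w).exists.choose

@[simp]
lemma lift_fac (hf : P.LiftsUniquely f) {W : C} (hW : P W) (w : W ⟶ Y) :
    hf.lift hW w ≫ f = w :=
  (hf hW w).exists.choose_spec

lemma hom_ext (hf : P.LiftsUniquely f) {W : C} (hW : P W) {l l' : W ⟶ X}
    (h : l ≫ f = l' ≫ f) : l = l' :=
  (hf hW _).unique h rfl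

noncomputable def iso (hf : P.LiftsUniquely f) (hf' : P.LiftsUniquely f') (hX : P X)
    (hX' : P X') : X' ≅ X where
  hom := hf.lift hX' f'
  inv := hf'.lift hX f
  hom_inv_id := hf'.hom_ext hX' (by simp)
  inv_hom_id := hf.hom_ext hX (by simp)

@[simp]
lemma iso_hom_fac (hf : P.LiftsUniquely f) (hf' : P.LiftsUniquely f') (hX : P X)
    (hX' : P X') : (hf.iso hf' hX hX').hom ≫ f = f' :=
  hf.lift_fac hX' f'

end LiftsUniquely

end CategoryTheory.ObjectProperty

namespace CategoryTheory.Pretriangulated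

variable {C : Type*} [Category C] [Preadditive C] [HasZeroObject C] [HasShift C ℤ]
  [∀ n : ℤ, (shiftFunctor C n).Additive] [Pretriangulated C]

lemma distinguished_mk_of_iso₂ {T : Triangle C} (hT : T ∈ distTriang C) {Y : C}
    (e : T.obj₂ ≅ Y) : Triangle.mk (T.mor₁ ≫ e.hom) (e.inv ≫ T.mor₂) T.mor₃ ∈ distTriang C :=
  isomorphic_distinguished _ hT _
    (Triangle.isoMk _ _ (Iso.refl _) e.symm (Iso.refl _) (by simp [Triangle.mk])
      (by simp [Triangle.mk]) (by simp [Triangle.mk]))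

end CategoryTheory.Pretriangulated

namespace CategoryTheory.Triangulated.TStructure

section

variable {C : Type*} [Category C] [Preadditive C] [HasZeroObject C] [HasShift C ℤ]
  [∀ n : ℤ, (shiftFunctor C n).Additive] [Pretriangulated C] (t : TStructure C)

lemma liftsUniquely_mor₁ {T : Triangle C} (hT : T ∈ distTriang C) (h₃ : t.ge 1 T.obj₃) :
    (t.le 0).LiftsUniquely T.mor₁ := by
  intro W hW w
  have : t.IsLE W 0 := ⟨hW⟩
  have : t.IsGE T.obj₃ 1 := ⟨h₃⟩
  have : t.IsGE T.invRotate.obj₁ 2 := t.isGE_shift T.obj₃ 1 (-1) 2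
  obtain ⟨l, hl⟩ := T.coyoneda_exact₂ hT w (t.zero _ 0 1)
  refine ⟨l, hl.symm, fun l' (hl' : l' ≫ T.mor₁ = w) => ?_⟩
  obtain ⟨q, hq⟩ := Triangle.coyoneda_exact₂ _ (inv_rot_of_distTriang _ hT) (l' - l)
    (show (l' - l) ≫ T.mor₁ = 0 by rw [Preadditive.sub_comp, hl', hl, sub_self])
  rw [← sub_eq_zero, hq, t.zero q 0 2]
  exact zero_comp

lemma ge_one_obj_of_leftInverse {F F' : C ⥤ C} [F'.Faithful] [F'.PreservesZeroMorphisms]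
    (hF' : ∀ W, t.le 0 W → t.le 0 (F'.obj W)) (e : ∀ Z, F'.obj (F.obj Z) ≅ Z) {Z : C}
    (hZ : t.ge 1 Z) : t.ge 1 (F.obj Z) := by
  have : t.IsGE Z 1 := ⟨hZ⟩
  suffices t.IsGE (F.obj Z) 1 from this.ge
  rw [t.isGE_iff_orthogonal 0 1 rfl]
  intro W w hW
  have : t.IsLE (F'.obj W) 0 := ⟨hF' W hW.le⟩
  apply F'.map_injective
  rw [F'.map_zero, ← cancel_mono (e Z).hom, zero_comp]
  exact t.zero _ 0 1

end

section Comap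

variable {D E : Type*} [Category D] [Preadditive D] [HasZeroObject D] [HasShift D ℤ]
  [∀ n : ℤ, (shiftFunctor D n).Additive] [Pretriangulated D]
  [Category E] [Preadditive E] [HasZeroObject E] [HasShift E ℤ]
  [∀ n : ℤ, (shiftFunctor E n).Additive] [Pretriangulated E]
  (t : TStructure D) (ω : E ⥤ D) [ω.CommShift ℤ] [ω.Faithful] [ω.PreservesZeroMorphisms]
  [ω.IsTriangulated]

def LiftsTruncations : Prop :=
  ∀ B : E, ∃ (X : E) (f : X ⟶ B) (Y : D) (g : ω.obj B ⟶ Y) (h : Y ⟶ (ω.obj X)⟦(1 : ℤ)⟧),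
    t.le 0 (ω.obj X) ∧ t.ge 1 Y ∧ Triangle.mk (ω.map f) g h ∈ distTriang D

def comap (hlift : t.LiftsTruncations ω) : TStructure E where
  le n X := t.le n (ω.obj X)
  ge n X := t.ge n (ω.obj X)
  le_isClosedUnderIsomorphisms n := ⟨fun e hX => (t.le n).prop_of_iso (ω.mapIso e) hX⟩
  ge_isClosedUnderIsomorphisms n := ⟨fun e hX => (t.ge n).prop_of_iso (ω.mapIso e) hX⟩
  le_shift n a n' h X hX :=
    (t.le n').prop_of_iso ((ω.commShiftIso a).symm.app X) (t.le_shift n a n' h _ hX)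
  ge_shift n a n' h X hX :=
    (t.ge n').prop_of_iso ((ω.commShiftIso a).symm.app X) (t.ge_shift n a n' h _ hX)
  zero' _ _ f hX hY := ω.map_injective (by rw [ω.map_zero]; exact t.zero' _ hX hY)
  le_zero_le X hX := t.le_zero_le _ hX
  ge_one_le X hX := t.ge_one_le _ hX
  exists_triangle_zero_one B := by
    obtain ⟨X, f, Y, g, h, hX, hY, hT⟩ := hlift B
    obtain ⟨Z, g', h', hT'⟩ := distinguished_cocone_triangle f
    obtain ⟨e, -⟩ := exists_iso_of_arrow_iso _ _ hT (ω.map_distinguished _ hT') (Iso.refl _)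
    exact ⟨X, Z, hX, (t.ge 1).prop_of_iso (Triangle.π₃.mapIso e) hY, f, g', h', hT'⟩

variable {t ω}

lemma comap_nondegenerate (hlift : t.LiftsTruncations ω) (ht : t.Nondegenerate) :
    (t.comap ω hlift).Nondegenerate := by
  have isZero_of_map (X : E) (hX : IsZero (ω.obj X)) : IsZero X := by
    rw [IsZero.iff_id_eq_zero, ← ω.map_eq_zero_iff, ω.map_id]
    exact hX.eq_of_src _ _
  exact ⟨fun X hX => isZero_of_map X (ht.1 _ hX), fun X hX => isZero_of_map X (ht.2 _ hX)⟩

lemma comap_bounded (hlift : t.LiftsTruncations ω) (ht : t.Bounded) : (t.comap ω hlift).Bounded :=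
  fun X => ht (ω.obj X)

lemma comap_stable (hlift : t.LiftsTruncations ω) (ht : t.Stable) : (t.comap ω hlift).Stable :=
  fun X hX => (t.le 0).prop_of_iso ((ω.commShiftIso (-1 : ℤ)).symm.app X) (ht _ hX)

end Comap

end CategoryTheory.Triangulated.TStructure

namespace GAction

section

variable (act : GAction G A)

noncomputable def oneObjIso (X : A) : (act.F 1).obj X ≅ X :=
  haveI := act.equiv 1
  (act.F 1).preimageIso ((act.δ 1 1).app X ≪≫ eqToIso (by rw [one_mul]))

noncomputable def invObjIso (g : G) (X : A) : (act.F g⁻¹).obj ((act.F g).obj X) ≅ X :=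
  (act.δ g⁻¹ g).app X ≪≫ eqToIso (by rw [mul_inv_cancel]) ≪≫ act.oneObjIso X

end

lemma ge_one_obj {D : Type*} [Category D] [Preadditive D] [HasZeroObject D]
    [HasShift D ℤ] [∀ n : ℤ, (shiftFunctor D n).Additive] [Pretriangulated D]
    (act : GAction G D) [∀ g : G, (act.F g).Additive] (t : TStructure D)
    (hinv : ∀ (g : G) (X : D), t.le 0 X → t.le 0 ((act.F g).obj X))
    (g : G) {Z : D} (hZ : t.ge 1 Z) : t.ge 1 ((act.F g).obj Z) :=
  haveI := act.equiv g⁻¹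
  t.ge_one_obj_of_leftInverse (F' := act.F g⁻¹) (hinv g⁻¹) (act.invObjIso g) hZ

end GAction

namespace EqObj

variable {act : GAction G A} {P : ObjectProperty A}
  (hP : ∀ (g : G) (Y : A), P Y → P ((act.F g).obj Y)) (B : EqObj act) {X : A} {f : X ⟶ B.obj}
  (hX : P X) (hf : P.LiftsUniquely f)
  (hfg : ∀ g : G, P.LiftsUniquely ((act.F g).map f ≫ (B.lam g).hom))

noncomputable def ofLiftsUniquely : EqObj act where
  obj := X
  lam g := hf.iso (hfg g) hX (hP g X hX)
  compat g h := hf.hom_ext (hP g _ (hP h X hX)) (by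
    calc _ = (act.F g).map ((act.F h).map f) ≫ (act.F g).map (B.lam h).hom ≫ (B.lam g).hom := by
          simp only [Category.assoc, ObjectProperty.LiftsUniquely.iso_hom_fac,
            ← Functor.map_comp_assoc]
      _ = (act.δ g h).hom.app X ≫ (act.F (h * g)).map f ≫ (B.lam (h * g)).hom := by
          rw [B.compat, ← (act.δ g h).hom.naturality_assoc, Functor.comp_map]
      _ = _ := by simp)

def homOfLiftsUniquely : ofLiftsUniquely hP B hX hf hfg ⟶ B where
  f := f
  comm g := (hf.iso_hom_fac (hfg g) hX (hP g X hX)).symm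

end EqObj

instance EqObj.faithful_forget (act : GAction G A) : (EqObj.forget act).Faithful :=
  ⟨fun h => EqObj.hom_ext h⟩

lemma EqObj.liftsTruncations_forget {D : Type*} [Category D] [Preadditive D]
    [HasZeroObject D] [HasShift D ℤ] [∀ n : ℤ, (shiftFunctor D n).Additive] [Pretriangulated D]
    (act : GAction G D) [∀ g : G, (act.F g).Additive] [∀ g : G, (act.F g).CommShift ℤ]
    [∀ g : G, (act.F g).IsTriangulated] (t : TStructure D)
    (hinv : ∀ (g : G) (X : D), t.le 0 X → t.le 0 ((act.F g).obj X)) :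
    t.LiftsTruncations (EqObj.forget act) := by
  intro B
  obtain ⟨X, Y, hX, hY, f, g, h, hT⟩ := t.exists_triangle_zero_one B.obj
  have hfg (k : G) : (t.le 0).LiftsUniquely ((act.F k).map f ≫ (B.lam k).hom) :=
    t.liftsUniquely_mor₁ (distinguished_mk_of_iso₂ ((act.F k).map_distinguished _ hT) (B.lam k))
      (act.ge_one_obj t hinv k hY)
  exact ⟨_, EqObj.homOfLiftsUniquely hinv B hX (t.liftsUniquely_mor₁ hT hY) hfg,
    Y, g, h, hX, hY, hT⟩

open Pretriangulated Triangulated in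
/-- Let `D` satisfy the running hypothesis: an admissible `G`-action with `|G|`
invertible, such that `D^G` carries the canonical triangulated structure.  If
`(D^{≤0}, D^{≥0})` is a `G`-invariant t-structure on `D`, then the preimages under `ω`
form a t-structure on `D^G`, which is nondegenerate (resp. bounded, resp. stable)
whenever the original one is. -/
theorem equivariant_tstructure
    {D : Type u} [Category.{v} D] [Preadditive D] [HasZeroObject D]
    [HasShift D ℤ] [∀ n : ℤ, (shiftFunctor D n).Additive] [Pretriangulated D]
    [Fintype G] (act : GAction G D) [∀ g : G, (act.F g).Additive]
    [∀ g : G, (act.F g).CommShift ℤ]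
    (hadm : AdmissibleOn act)
    (hG : NatInvertibleIn (Fintype.card G) D)
    -- the canonical triangulated structure on `D^G`
    [HasShift (EqObj act) ℤ] [∀ n : ℤ, (shiftFunctor (EqObj act) n).Additive]
    [(EqObj.forget act).CommShift ℤ] [Pretriangulated (EqObj act)]
    (hdist : ∀ T : Triangle (EqObj act),
      (T ∈ distTriang (EqObj act)) ↔ ((EqObj.forget act).mapTriangle.obj T ∈ distTriang D))
    (t : TStructure D)
    (hinv : ∀ (g : G) (X : D), t.le 0 X → t.le 0 ((act.F g).obj X)) :
    ∃ tG : TStructure (EqObj act),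
      (∀ (n : ℤ) (X : EqObj act), tG.le n X ↔ t.le n X.obj) ∧
      (∀ (n : ℤ) (X : EqObj act), tG.ge n X ↔ t.ge n X.obj) ∧
      (t.Nondegenerate → tG.Nondegenerate) ∧
      (t.Bounded → tG.Bounded) ∧
      (t.Stable → tG.Stable) := by
  have : ∀ g : G, (act.F g).IsTriangulated := fun g => ⟨hadm.exact g⟩
  have : (EqObj.forget act).IsTriangulated := ⟨fun T => (hdist T).1⟩
  have hlift := EqObj.liftsTruncations_forget act t hinv
  exact ⟨t.comap _ hlift, fun _ _ => Iff.rfl, fun _ _ => Iff.rfl,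
    TStructure.comap_nondegenerate hlift, TStructure.comap_bounded hlift,
    TStructure.comap_stable hlift⟩
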